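/- arXiv:0710.0080 — 4 statements merged into one kernel-verified Lean document; each statement's English description precedes it below -/
import Mathlib

section
/- If x, y ∈ X satisfy d^φ(x,y) ≠ d(x,y), then d^φ(x,y) ≥ 1/(2(1+d(m,x))). -/
/-- δ^φ(x,y) = min{d(x,y), 1/(1+d(m,x)) + φ(x,y) + 1/(1+d(m,y))}. -/
noncomputable def deltaPhi {X : Type*} [MetricSpace X] (m : X) (φ : X → X → ℝ) (x y : X) : ℝ :=
  min (dist x y) (1 / (1 + dist m x) + φ x y + 1 / (1 + dist m y))

/-- d^φ(x,y): infimum over finite chains x = x₀, ..., xₙ = y of Σ δ^φ(x_{i-1}, x_i). -/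
noncomputable def dPhi {X : Type*} [MetricSpace X] (m : X) (φ : X → X → ℝ) (x y : X) : ℝ :=
  sInf { r : ℝ | ∃ (n : ℕ) (f : ℕ → X), 1 ≤ n ∧ f 0 = x ∧ f n = y ∧
    r = ∑ i ∈ Finset.range n, deltaPhi m φ (f i) (f (i + 1)) }

/-!
Put `c = 1/(1+d(m,x))` and `g v = min (d(x,v)) c`. Every step of a chain raises `g` by at most
its `δ^φ`-cost: a short step by the triangle inequality, a long one because it costs at least
`1/(1+d(m,u))`, which is at least `c - d(x,u)` since `t ↦ 1/(1+t)` is 1-Lipschitz on `[0,∞)`.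
Telescoping gives `min (d(x,y)) c ≤ d^φ(x,y) ≤ d(x,y)`, so `d^φ(x,y) ≠ d(x,y)` forces
`d^φ(x,y) ≥ c`.
-/

open Finset

lemma one_div_one_add_le_abs_sub_add {a b : ℝ} (ha : 0 ≤ a) (hb : 0 ≤ b) :
    1 / (1 + a) ≤ |a - b| + 1 / (1 + b) := by
  have hsub : 1 / (1 + a) - 1 / (1 + b) = (b - a) / ((1 + a) * (1 + b)) := by
    field_simp
    ring
  have hquot : (b - a) / ((1 + a) * (1 + b)) ≤ |a - b| := by
    rw [abs_sub_comm]
    exact (div_le_div_of_nonneg_right (le_abs_self _) (by positivity)).trans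
      (div_le_self (abs_nonneg _) (by nlinarith))
  linarith

section

variable {X : Type*} [MetricSpace X]

lemma one_div_one_add_dist_le (m u v : X) :
    1 / (1 + dist m u) ≤ dist u v + 1 / (1 + dist m v) := by
  have hlip : |dist m u - dist m v| ≤ dist u v := by
    simpa only [dist_comm m] using abs_dist_sub_le u v m
  linarith [one_div_one_add_le_abs_sub_add (dist_nonneg (x := m) (y := u))
    (dist_nonneg (x := m) (y := v))]

variable (m : X) {φ : X → X → ℝ}

lemma deltaPhi_le_dist (x y : X) : deltaPhi m φ x y ≤ dist x y := min_le_left _ _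

lemma deltaPhi_nonneg (hφ : ∀ x y, 0 ≤ φ x y) (x y : X) : 0 ≤ deltaPhi m φ x y :=
  le_min dist_nonneg (by positivity [hφ x y])

lemma one_div_one_add_dist_le_deltaPhi (hφ : ∀ x y, 0 ≤ φ x y) {u v : X}
    (hlong : deltaPhi m φ u v < dist u v) : 1 / (1 + dist m u) ≤ deltaPhi m φ u v := by
  rw [deltaPhi, min_eq_right (min_lt_iff.mp hlong |>.resolve_left (lt_irrefl _)).le]
  have : 0 ≤ 1 / (1 + dist m v) := by positivity
  linarith [hφ u v]

lemma min_dist_le_add_deltaPhi (hφ : ∀ x y, 0 ≤ φ x y) (x u v : X) :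
    min (dist x v) (1 / (1 + dist m x)) ≤
      min (dist x u) (1 / (1 + dist m x)) + deltaPhi m φ u v := by
  rcases le_total (1 / (1 + dist m x)) (dist x u) with hfar | hnear
  · rw [min_eq_right hfar]
    linarith [min_le_right (dist x v) (1 / (1 + dist m x)), deltaPhi_nonneg m hφ u v]
  rw [min_eq_left hnear]
  rcases (deltaPhi_le_dist m u v).eq_or_lt with hshort | hlong
  · rw [hshort]
    exact (min_le_left _ _).trans (dist_triangle x u v)
  · calc min (dist x v) (1 / (1 + dist m x))
        ≤ 1 / (1 + dist m x) := min_le_right _ _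
      _ ≤ dist x u + 1 / (1 + dist m u) := one_div_one_add_dist_le m x u
      _ ≤ dist x u + deltaPhi m φ u v := by
        gcongr; exact one_div_one_add_dist_le_deltaPhi m hφ hlong

lemma min_dist_le_sum_deltaPhi (hφ : ∀ x y, 0 ≤ φ x y) (f : ℕ → X) (n : ℕ) :
    min (dist (f 0) (f n)) (1 / (1 + dist m (f 0))) ≤
      ∑ i ∈ range n, deltaPhi m φ (f i) (f (i + 1)) := by
  set g : X → ℝ := fun v ↦ min (dist (f 0) v) (1 / (1 + dist m (f 0)))
  have hg0 : g (f 0) = 0 := by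
    simp only [g, dist_self]
    exact min_eq_left (by positivity)
  have hstep : ∀ i ∈ range n, g (f (i + 1)) - g (f i) ≤ deltaPhi m φ (f i) (f (i + 1)) :=
    fun i _ ↦ sub_le_iff_le_add'.mpr (min_dist_le_add_deltaPhi m hφ _ _ _)
  have := (sum_range_sub (g ∘ f) n).symm.le.trans (sum_le_sum hstep)
  simpa only [Function.comp_apply, hg0, sub_zero] using this

lemma dPhi_le_dist (hφ : ∀ x y, 0 ≤ φ x y) (x y : X) : dPhi m φ x y ≤ dist x y := by
  refine le_trans (csInf_le ⟨0, ?_⟩ ?_) (deltaPhi_le_dist (φ := φ) m x y)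
  · rintro r ⟨n, f, -, -, -, rfl⟩
    exact sum_nonneg fun i _ ↦ deltaPhi_nonneg m hφ _ _
  · exact ⟨1, fun i ↦ if i = 0 then x else y, le_rfl, rfl, rfl, by simp⟩

lemma min_dist_le_dPhi (hφ : ∀ x y, 0 ≤ φ x y) (x y : X) :
    min (dist x y) (1 / (1 + dist m x)) ≤ dPhi m φ x y := by
  refine le_csInf ⟨_, 1, fun i ↦ if i = 0 then x else y, le_rfl, rfl, rfl, rfl⟩ ?_
  rintro r ⟨n, f, -, rfl, rfl, rfl⟩
  exact min_dist_le_sum_deltaPhi m hφ f n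

end

theorem stmt1_general {X : Type*} [MetricSpace X] (m : X) (φ : X → X → ℝ)
    (hφ : ∀ x y, 0 ≤ φ x y)
    (x y : X) (h : dPhi m φ x y ≠ dist x y) :
    dPhi m φ x y ≥ 1 / (2 * (1 + dist m x)) := by
  have hlt : dPhi m φ x y < dist x y := (dPhi_le_dist m hφ x y).lt_of_ne h
  have hfar : 1 / (1 + dist m x) ≤ dPhi m φ x y :=
    (min_le_iff.mp (min_dist_le_dPhi m hφ x y)).resolve_left hlt.not_ge
  have hhalf : 1 / (2 * (1 + dist m x)) ≤ 1 / (1 + dist m x) :=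
    one_div_le_one_div_of_le (by positivity) (by linarith [dist_nonneg (x := m) (y := x)])
  exact hhalf.trans hfar

theorem stmt1 {X : Type*} [MetricSpace X] (m : X) (φ : X → X → ℝ)
    (hφ : ∀ x y, 0 ≤ φ x y) (hsym : ∀ x y, φ x y = φ y x)
    (x y : X) (h : dPhi m φ x y ≠ dist x y) :
    dPhi m φ x y ≥ 1 / (2 * (1 + dist m x)) :=
  stmt1_general m φ hφ x y h
end

section
/- The identity map from (X, d^φ) to (X, d) is a homeomorphism; that is, the metrics d^φ and d are topologically equivalent. -/
/-!
Every one-step chain is admissible, so `d^φ ≤ δ^φ ≤ d`. Conversely, a chain starting at `x` whose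
total `δ^φ`-length is below `min ε (1 / (1 + d(m,x) + ε))` never leaves the `ε`-ball around `x`,
so each of its steps is shorter than the shortcut term `1 / (1 + d(m,xᵢ))`; hence every step is a
genuine `d`-step and the triangle inequality gives `d(x,y) < ε`.
-/

open Finset

noncomputable section

namespace DPhi

variable {X : Type*} [MetricSpace X] (m : X) (φ : X → X → ℝ)

def chainSum (f : ℕ → X) (n : ℕ) : ℝ :=
  ∑ i ∈ range n, deltaPhi m φ (f i) (f (i + 1))

def chainSums (x y : X) : Set ℝ :=
  { r : ℝ | ∃ (n : ℕ) (f : ℕ → X), 1 ≤ n ∧ f 0 = x ∧ f n = y ∧ r = chainSum m φ f n }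

theorem deltaPhi_le_dist (x y : X) : deltaPhi m φ x y ≤ dist x y := min_le_left _ _

variable {m φ}

theorem deltaPhi_nonneg (hφ : ∀ x y, 0 ≤ φ x y) (x y : X) : 0 ≤ deltaPhi m φ x y := by
  refine le_min dist_nonneg ?_
  have := hφ x y
  positivity

theorem deltaPhi_eq_dist_of_lt (hφ : ∀ x y, 0 ≤ φ x y) {x y : X}
    (h : deltaPhi m φ x y < 1 / (1 + dist m x)) : deltaPhi m φ x y = dist x y := by
  refine min_eq_left (le_of_not_gt fun hlt => h.not_ge ?_)
  rw [deltaPhi, min_eq_right hlt.le]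
  have := hφ x y
  have : 0 ≤ 1 / (1 + dist m y) := by positivity
  linarith

theorem chainSum_mono (hφ : ∀ x y, 0 ≤ φ x y) (f : ℕ → X) {k n : ℕ} (hkn : k ≤ n) :
    chainSum m φ f k ≤ chainSum m φ f n :=
  sum_le_sum_of_subset_of_nonneg (range_subset_range.mpr hkn)
    fun _ _ _ => deltaPhi_nonneg hφ _ _

theorem deltaPhi_le_chainSum (hφ : ∀ x y, 0 ≤ φ x y) (f : ℕ → X) {k n : ℕ} (hkn : k < n) :
    deltaPhi m φ (f k) (f (k + 1)) ≤ chainSum m φ f n :=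
  single_le_sum (f := fun i => deltaPhi m φ (f i) (f (i + 1)))
    (fun _ _ => deltaPhi_nonneg hφ _ _) (mem_range.mpr hkn)

theorem bddBelow_chainSums (hφ : ∀ x y, 0 ≤ φ x y) (x y : X) : BddBelow (chainSums m φ x y) := by
  refine ⟨0, ?_⟩
  rintro r ⟨n, f, -, -, -, rfl⟩
  exact sum_nonneg fun _ _ => deltaPhi_nonneg hφ _ _

theorem deltaPhi_mem_chainSums (x y : X) : deltaPhi m φ x y ∈ chainSums m φ x y :=
  ⟨1, fun i => if i = 0 then x else y, le_rfl, by simp, by simp, by simp [chainSum]⟩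

theorem dPhi_le_deltaPhi (hφ : ∀ x y, 0 ≤ φ x y) (x y : X) : dPhi m φ x y ≤ deltaPhi m φ x y :=
  csInf_le (bddBelow_chainSums hφ x y) (deltaPhi_mem_chainSums x y)

theorem exists_chainSum_lt_of_dPhi_lt {x y : X} {δ : ℝ} (h : dPhi m φ x y < δ) :
    ∃ (n : ℕ) (f : ℕ → X), f 0 = x ∧ f n = y ∧ chainSum m φ f n < δ := by
  obtain ⟨r, ⟨n, f, -, hx, hy, rfl⟩, hr⟩ :=
    exists_lt_of_csInf_lt ⟨_, deltaPhi_mem_chainSums x y⟩ h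
  exact ⟨n, f, hx, hy, hr⟩

theorem dist_le_chainSum_of_lt (hφ : ∀ x y, 0 ≤ φ x y) {f : ℕ → X} {n : ℕ} {ε : ℝ}
    (hε : chainSum m φ f n < ε) (hshort : chainSum m φ f n < 1 / (1 + dist m (f 0) + ε)) :
    dist (f 0) (f n) ≤ chainSum m φ f n := by
  suffices ∀ k ≤ n, dist (f 0) (f k) ≤ chainSum m φ f k from this n le_rfl
  intro k hk
  induction k with
  | zero => simp [chainSum]
  | succ k ih =>
    have hkn : k < n := hk
    have hpart := ih hkn.le
    have hnear : dist m (f k) < dist m (f 0) + ε := by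
      have := dist_triangle m (f 0) (f k)
      linarith [chainSum_mono (m := m) hφ f hkn.le]
    have hstep : deltaPhi m φ (f k) (f (k + 1)) < 1 / (1 + dist m (f k)) :=
      calc deltaPhi m φ (f k) (f (k + 1)) ≤ chainSum m φ f n := deltaPhi_le_chainSum hφ f hkn
        _ < 1 / (1 + dist m (f 0) + ε) := hshort
        _ ≤ 1 / (1 + dist m (f k)) := one_div_le_one_div_of_le (by positivity) (by linarith)
    calc dist (f 0) (f (k + 1)) ≤ dist (f 0) (f k) + dist (f k) (f (k + 1)) := dist_triangle _ _ _
      _ ≤ chainSum m φ f k + deltaPhi m φ (f k) (f (k + 1)) := by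
        rw [deltaPhi_eq_dist_of_lt hφ hstep]
        linarith
      _ = chainSum m φ f (k + 1) := (sum_range_succ _ _).symm

end DPhi

end

open DPhi in
theorem stmt7_general {X : Type*} [MetricSpace X] (m : X) (φ : X → X → ℝ)
    (hφ : ∀ x y, 0 ≤ φ x y) :
    (∀ x : X, ∀ ε > (0 : ℝ), ∃ δ > (0 : ℝ), ∀ y, dist x y < δ → dPhi m φ x y < ε) ∧
    (∀ x : X, ∀ ε > (0 : ℝ), ∃ δ > (0 : ℝ), ∀ y, dPhi m φ x y < δ → dist x y < ε) := by
  refine ⟨fun x ε hε => ⟨ε, hε, fun y hy => ?_⟩, fun x ε hε => ?_⟩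
  · exact (dPhi_le_deltaPhi hφ x y).trans_lt ((deltaPhi_le_dist m φ x y).trans_lt hy)
  · have hc : 0 < 1 / (1 + dist m x + ε) := by positivity
    refine ⟨min ε (1 / (1 + dist m x + ε)), lt_min hε hc, fun y hy => ?_⟩
    obtain ⟨n, f, rfl, rfl, hsum⟩ := exists_chainSum_lt_of_dPhi_lt hy
    have hε' := hsum.trans_le (min_le_left _ _)
    exact (dist_le_chainSum_of_lt hφ hε' (hsum.trans_le (min_le_right _ _))).trans_lt hε'

/-- The identity map from (X, d^φ) to (X, d) is a homeomorphism: the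
identity is continuous in both directions, expressed by ε-δ conditions. -/
theorem stmt7 {X : Type*} [MetricSpace X] (m : X) (φ : X → X → ℝ)
    (hφ : ∀ x y, 0 ≤ φ x y) (hsym : ∀ x y, φ x y = φ y x) :
    (∀ x : X, ∀ ε > (0 : ℝ), ∃ δ > (0 : ℝ), ∀ y, dist x y < δ → dPhi m φ x y < ε) ∧
    (∀ x : X, ∀ ε > (0 : ℝ), ∃ δ > (0 : ℝ), ∀ y, dPhi m φ x y < δ → dist x y < ε) :=
  stmt7_general m φ hφ
end

section
/- Let x, y ∈ ℝˢ with |x| ≥ 1, |y| ≥ 1, and let x = x₀, x₁, ..., xₘ = y be a finite chain with |xᵢ| < 1 for all 1 ≤ i ≤ m−1. Then Σᵢ₌₁ᵐ δ^φ(x_{i-1}, xᵢ) ≥ |x/|x| − y/|y||. -/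
/-- aₘ = 1 + 1/2 + ⋯ + 1/m. -/
noncomputable def harm (m : ℕ) : ℝ := ∑ k ∈ Finset.range m, (1 : ℝ) / (k + 1)

-- The function φ for the standard compactification of ℝˢ:
-- φ(x,y) = 0 if y = (a_q/a_p) x for some p,q ≥ 1; φ(x,y) = (1/aₘ)|x−y| if x,y
-- lie on the sphere Sₘ of radius aₘ (note ‖x‖ = aₘ there); |x−y| otherwise.
open Classical in
noncomputable def phiStd (s : ℕ) (x y : EuclideanSpace ℝ (Fin s)) : ℝ :=
  if ∃ p q : ℕ, 1 ≤ p ∧ 1 ≤ q ∧ y = (harm q / harm p) • x then 0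
  else if ∃ m : ℕ, 1 ≤ m ∧ ‖x‖ = harm m ∧ ‖y‖ = harm m then (1 / ‖x‖) * ‖x - y‖
  else ‖x - y‖

/-!
The radial retraction `P z = z / max 1 ‖z‖` onto the closed unit ball sends `x` and `y` to
`x/‖x‖` and `y/‖y‖`, so by the triangle inequality it suffices that it moves each link of the
chain by at most its `δ^φ`-length. It is `1`-Lipschitz, which handles the branch `|a - b|` of
`δ^φ` and the generic branch of `φ`. On a sphere `Sₘ` (where `aₘ ≥ 1`) it is the dilation by
`1/aₘ`, which is exactly the value of `φ` there. On a ray it only changes the norm, and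
`1 - ‖P a‖ ≤ 1/(1 + ‖a‖)` bounds that change by the two boundary terms of `δ^φ`.
-/

open RealInnerProductSpace

section BallRetract

variable {E : Type*} [NormedAddCommGroup E] [InnerProductSpace ℝ E]

noncomputable def ballRetract (z : E) : E := (max 1 ‖z‖)⁻¹ • z

lemma ballRetract_of_norm_le_one {z : E} (hz : ‖z‖ ≤ 1) : ballRetract z = z := by
  rw [ballRetract, max_eq_left hz, inv_one, one_smul]

lemma ballRetract_of_one_le_norm {z : E} (hz : 1 ≤ ‖z‖) : ballRetract z = ‖z‖⁻¹ • z := by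
  rw [ballRetract, max_eq_right hz]

lemma norm_ballRetract_le_one (z : E) : ‖ballRetract z‖ ≤ 1 := by
  rw [ballRetract, norm_smul, norm_inv, Real.norm_of_nonneg (by positivity), inv_mul_le_one₀
    (by positivity)]
  exact le_max_right _ _

lemma norm_inv_norm_smul_self {z : E} (hz : z ≠ 0) : ‖‖z‖⁻¹ • z‖ = 1 := by
  rw [norm_smul, norm_inv, norm_norm, inv_mul_cancel₀ (norm_ne_zero_iff.mpr hz)]

lemma one_sub_norm_ballRetract_le (z : E) : 1 - ‖ballRetract z‖ ≤ 1 / (1 + ‖z‖) := by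
  rcases le_total ‖z‖ 1 with hz | hz
  · rw [ballRetract_of_norm_le_one hz, le_div_iff₀ (by positivity)]
    nlinarith [norm_nonneg z]
  · have hz0 : z ≠ 0 := norm_pos_iff.mp (one_pos.trans_le hz)
    rw [ballRetract_of_one_le_norm hz, norm_inv_norm_smul_self hz0, sub_self]
    positivity

lemma norm_sub_le_norm_sub_smul_of_norm_eq_one {a u : E} (ha : ‖a‖ ≤ 1) (hu : ‖u‖ = 1)
    {B : ℝ} (hB : 1 ≤ B) : ‖a - u‖ ≤ ‖a - B • u‖ := by
  have hau : ⟪a, u⟫ ≤ 1 := (real_inner_le_norm a u).trans (by rw [hu, mul_one]; exact ha)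
  have hsq : ‖a - u‖ ^ 2 ≤ ‖a - B • u‖ ^ 2 := by
    rw [norm_sub_sq_real, norm_sub_sq_real, real_inner_smul_right, norm_smul, hu,
      Real.norm_of_nonneg (by linarith)]
    nlinarith [mul_nonneg (sub_nonneg.mpr hB) (by linarith : (0 : ℝ) ≤ B + 1 - 2 * ⟪a, u⟫)]
  exact (sq_le_sq₀ (norm_nonneg _) (norm_nonneg _)).mp hsq

lemma dist_ballRetract_le (a b : E) : dist (ballRetract a) (ballRetract b) ≤ dist a b := by
  wlog hab : ‖a‖ ≤ ‖b‖ generalizing a b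
  · rw [dist_comm, dist_comm a]
    exact this b a (le_of_not_ge hab)
  rcases le_total ‖b‖ 1 with hb | hb
  · rw [ballRetract_of_norm_le_one hb, ballRetract_of_norm_le_one (hab.trans hb)]
  set c := (max 1 ‖a‖)⁻¹ with hc
  have hc0 : 0 < c := by positivity
  have hc1 : c ≤ 1 := inv_le_one_of_one_le₀ (le_max_left _ _)
  have hb0 : ‖b‖ ≠ 0 := (one_pos.trans_le hb).ne'
  have hcb : 1 ≤ c * ‖b‖ := by
    rw [hc, inv_mul_eq_div, one_le_div (by positivity)]
    exact max_le hb hab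
  calc dist (ballRetract a) (ballRetract b) = ‖c • a - ‖b‖⁻¹ • b‖ := by
        rw [dist_eq_norm, ballRetract_of_one_le_norm hb, ballRetract]
    _ ≤ ‖c • a - (c * ‖b‖) • (‖b‖⁻¹ • b)‖ :=
        norm_sub_le_norm_sub_smul_of_norm_eq_one (norm_ballRetract_le_one a)
          (norm_inv_norm_smul_self (norm_ne_zero_iff.mp hb0)) hcb
    _ = c * dist a b := by
        rw [smul_smul, mul_assoc, mul_inv_cancel₀ hb0, mul_one, ← smul_sub, norm_smul,
          Real.norm_of_nonneg hc0.le, dist_eq_norm]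
    _ ≤ dist a b := mul_le_of_le_one_left dist_nonneg hc1

lemma dist_ballRetract_of_norm_eq {a b : E} (ha : 1 ≤ ‖a‖) (hab : ‖a‖ = ‖b‖) :
    dist (ballRetract a) (ballRetract b) = ‖a‖⁻¹ * dist a b := by
  rw [ballRetract_of_one_le_norm ha, ballRetract_of_one_le_norm (hab ▸ ha), ← hab, dist_eq_norm,
    ← smul_sub, norm_smul, norm_inv, norm_norm, dist_eq_norm]

lemma dist_ballRetract_le_of_sameRay {a b : E} (h : SameRay ℝ a b) :
    dist (ballRetract a) (ballRetract b) ≤ 1 / (1 + ‖a‖) + 1 / (1 + ‖b‖) := by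
  have hP : SameRay ℝ (ballRetract a) (ballRetract b) :=
    (h.nonneg_smul_left (by positivity)).nonneg_smul_right (by positivity)
  have ha := one_sub_norm_ballRetract_le a
  have hb := one_sub_norm_ballRetract_le b
  have ha1 := norm_ballRetract_le_one a
  have hb1 := norm_ballRetract_le_one b
  rw [dist_eq_norm, hP.norm_sub, abs_le]
  constructor <;> linarith

end BallRetract

lemma one_le_harm {m : ℕ} (hm : 1 ≤ m) : 1 ≤ harm m := by
  calc (1 : ℝ) = harm 1 := by simp [harm]
    _ ≤ harm m := Finset.sum_le_sum_of_subset_of_nonneg (Finset.range_subset_range.mpr hm)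
        fun _ _ _ => by positivity

lemma dist_ballRetract_le_deltaPhi_phiStd {s : ℕ} (a b : EuclideanSpace ℝ (Fin s)) :
    dist (ballRetract a) (ballRetract b) ≤ deltaPhi 0 (phiStd s) a b := by
  refine le_min (dist_ballRetract_le a b) ?_
  have ha : 0 ≤ 1 / (1 + ‖a‖) := by positivity
  have hb : 0 ≤ 1 / (1 + ‖b‖) := by positivity
  simp only [dist_zero_left]
  rw [phiStd]
  split_ifs with hray hsphere
  · obtain ⟨p, q, -, -, rfl⟩ := hray
    have hc : 0 ≤ harm q / harm p := by unfold harm; positivity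
    linarith [dist_ballRetract_le_of_sameRay (SameRay.sameRay_nonneg_smul_right a hc)]
  · obtain ⟨n, hn, han, hbn⟩ := hsphere
    have hsph := dist_ballRetract_of_norm_eq (han ▸ one_le_harm hn) (han.trans hbn.symm)
    rw [dist_eq_norm a b, ← one_div] at hsph
    linarith
  · linarith [dist_eq_norm a b ▸ dist_ballRetract_le a b]

theorem stmt13_general (s : ℕ) (x y : EuclideanSpace ℝ (Fin s))
    (hx : 1 ≤ ‖x‖) (hy : 1 ≤ ‖y‖)
    (m : ℕ) (f : ℕ → EuclideanSpace ℝ (Fin s))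
    (h0 : f 0 = x) (hfm : f m = y) :
    ∑ i ∈ Finset.range m, deltaPhi (0 : EuclideanSpace ℝ (Fin s)) (phiStd s) (f i) (f (i + 1))
      ≥ ‖‖x‖⁻¹ • x - ‖y‖⁻¹ • y‖ := by
  rw [ge_iff_le, ← ballRetract_of_one_le_norm hx, ← ballRetract_of_one_le_norm hy,
    ← dist_eq_norm, ← h0, ← hfm]
  calc dist (ballRetract (f 0)) (ballRetract (f m))
      ≤ ∑ i ∈ Finset.range m, dist (ballRetract (f i)) (ballRetract (f (i + 1))) :=
        dist_le_range_sum_dist (fun i => ballRetract (f i)) m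
    _ ≤ _ := Finset.sum_le_sum fun i _ => dist_ballRetract_le_deltaPhi_phiStd _ _

/-- Chains from x to y passing only through the open unit ball have δ^φ-length
at least the distance between the radial projections of x and y to the unit sphere. -/
theorem stmt13 (s : ℕ) (hs : 2 ≤ s) (x y : EuclideanSpace ℝ (Fin s))
    (hx : 1 ≤ ‖x‖) (hy : 1 ≤ ‖y‖)
    (m : ℕ) (hm : 1 ≤ m) (f : ℕ → EuclideanSpace ℝ (Fin s))
    (h0 : f 0 = x) (hfm : f m = y)
    (hmid : ∀ i, 1 ≤ i → i ≤ m - 1 → ‖f i‖ < 1) :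
    ∑ i ∈ Finset.range m, deltaPhi (0 : EuclideanSpace ℝ (Fin s)) (phiStd s) (f i) (f (i + 1))
      ≥ ‖‖x‖⁻¹ • x - ‖y‖⁻¹ • y‖ :=
  stmt13_general s x y hx hy m f h0 hfm
end

section
/- For distinct unit vectors x, y ∈ S¹ ⊂ ℝˢ (s ≥ 2), the rays L_x and L_y defined by the bending construction with parameter δ ∈ (0, π/4) satisfy d_E(L_x, L_y) ≥ (1/(2√2))·d_E(x, y), where d_E(A,B) = inf{|a−b| : a ∈ A, b ∈ B}. -/
-- The first standard basis vector a₁ = (1,0,…,0) of ℝˢ.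
noncomputable def e1 (s : ℕ) : EuclideanSpace ℝ (Fin s) :=
  if h : 0 < s then EuclideanSpace.single (⟨0, h⟩ : Fin s) 1 else 0

-- The direction of the bent ray L_x (bending construction with parameter δ):
-- a₁ if ∠(x,a₁) ≤ δ; −a₁ if ∠(x,−a₁) ≤ δ; otherwise the unit vector in
-- span{a₁, x}, on the same side of the a₁-axis as x, making angle
-- θ = (π/(π−2δ))(∠(x,a₁) − δ) with a₁.
open Classical in
noncomputable def rayDir (s : ℕ) (δ : ℝ) (x : EuclideanSpace ℝ (Fin s)) :
    EuclideanSpace ℝ (Fin s) :=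
  if InnerProductGeometry.angle x (e1 s) ≤ δ then e1 s
  else if InnerProductGeometry.angle x (-(e1 s)) ≤ δ then -(e1 s)
  else
    Real.cos ((Real.pi / (Real.pi - 2 * δ)) * (InnerProductGeometry.angle x (e1 s) - δ)) • e1 s
      + Real.sin ((Real.pi / (Real.pi - 2 * δ)) * (InnerProductGeometry.angle x (e1 s) - δ)) •
        (‖x - (inner ℝ x (e1 s) : ℝ) • e1 s‖⁻¹ • (x - (inner ℝ x (e1 s) : ℝ) • e1 s))

-- The ray L_x starting at the unit vector x, from the bending construction.
def ray (s : ℕ) (δ : ℝ) (x : EuclideanSpace ℝ (Fin s)) : Set (EuclideanSpace ℝ (Fin s)) :=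
  { y | ∃ t : ℝ, 0 ≤ t ∧ y = x + t • rayDir s δ x }

-- d_E(A,B) = inf{|a−b| : a ∈ A, b ∈ B}.
noncomputable def setDist {E : Type*} [MetricSpace E] (A B : Set E) : ℝ :=
  sInf { r : ℝ | ∃ a ∈ A, ∃ b ∈ B, r = dist a b }

/-!
Write a unit vector as `x = cos A • a₁ + sin A • w` with `A = ∠(x, a₁)` and `w` a unit vector
orthogonal to `a₁`. Then `L_x` has direction `cos θ • a₁ + sin θ • w`, where `θ = bendAngle δ A`
is monotone in `A` and within `δ ≤ π/4` of it. The squared distance between points of `L_x` and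
`L_y` is affine in `c = ⟪w_x, w_y⟫ ∈ [-1, 1]`, so it suffices to treat the planar cases `c = ±1`.
In the plane, project onto the normal of the mean direction of the two rays: both rays move
apart along it, while the chord from `x` to `y` keeps at least `1/√2` of its length, because the
normal makes an angle at most `π/4` with it. Hence even `d_E(L_x, L_y) ≥ d_E(x, y) / √2`.
-/

open Real InnerProductGeometry RealInnerProductSpace

lemma cos_sub_cos_sq_add_sin_sub_sin_sq (A B : ℝ) :
    (cos A - cos B) ^ 2 + (sin A - sin B) ^ 2 = 4 * sin ((B - A) / 2) ^ 2 := by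
  have hneg : sin ((A - B) / 2) = -sin ((B - A) / 2) := by
    rw [← sin_neg]; ring_nf
  rw [cos_sub_cos, sin_sub_sin, hneg]
  linear_combination (4 * sin ((B - A) / 2) ^ 2) * sin_sq_add_cos_sq ((A + B) / 2)

lemma sqrt_two_div_two_le_cos {x : ℝ} (hx : |x| ≤ π / 4) : √2 / 2 ≤ cos x := by
  rw [← cos_pi_div_four, ← cos_abs x]
  exact cos_le_cos_of_nonneg_of_le_pi (abs_nonneg x) (by linarith [pi_pos]) hx

-- Projection onto the normal of the mean direction `μ`: both ray displacements contribute
-- nonnegatively, the chord at least `√2 * sin ((B - A) / 2)`.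
lemma chord_sq_le_two_mul_dist_sq_of_near_directions {A B θa θb t u : ℝ}
    (hAB : A ≤ B) (hBA : B - A ≤ 2 * π) (hθ : θa ≤ θb) (hθ' : θb - θa ≤ 2 * π)
    (ha : |θa - A| ≤ π / 4) (hb : |θb - B| ≤ π / 4) (ht : 0 ≤ t) (hu : 0 ≤ u) :
    (cos A - cos B) ^ 2 + (sin A - sin B) ^ 2
      ≤ 2 * ((cos A + t * cos θa - (cos B + u * cos θb)) ^ 2
        + (sin A + t * sin θa - (sin B + u * sin θb)) ^ 2) := by
  set a := cos A + t * cos θa - (cos B + u * cos θb)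
  set b := sin A + t * sin θa - (sin B + u * sin θb)
  set μ := (θa + θb) / 2
  have hchord : sin (B - μ) - sin (A - μ) = 2 * sin ((B - A) / 2) * cos ((A + B) / 2 - μ) := by
    rw [sin_sub_sin]; ring_nf
  have hproj : a * sin μ - b * cos μ
      = 2 * sin ((B - A) / 2) * cos ((A + B) / 2 - μ) + (t + u) * sin ((θb - θa) / 2) := by
    have hθa : (θb - θa) / 2 = μ - θa := by ring
    have hθb : μ - θa = θb - μ := by ring
    rw [← hchord, add_mul, hθa]
    nth_rw 2 [hθb]
    simp only [a, b, sin_sub]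
    ring
  have hsin : 0 ≤ sin ((B - A) / 2) := sin_nonneg_of_nonneg_of_le_pi (by linarith) (by linarith)
  have hsin' : 0 ≤ sin ((θb - θa) / 2) :=
    sin_nonneg_of_nonneg_of_le_pi (by linarith) (by linarith)
  have hcos : √2 / 2 ≤ cos ((A + B) / 2 - μ) := by
    apply sqrt_two_div_two_le_cos
    rw [abs_le] at ha hb ⊢
    constructor <;> linarith [show μ = (θa + θb) / 2 from rfl]
  have hlow : √2 * sin ((B - A) / 2) ≤ a * sin μ - b * cos μ := by
    rw [hproj]
    nlinarith [mul_nonneg (add_nonneg ht hu) hsin']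
  have hCS : (a * sin μ - b * cos μ) ^ 2 ≤ a ^ 2 + b ^ 2 := by
    nlinarith [sq_nonneg (a * cos μ + b * sin μ), sin_sq_add_cos_sq μ]
  have hsq : 2 * sin ((B - A) / 2) ^ 2 ≤ (a * sin μ - b * cos μ) ^ 2 := by
    calc 2 * sin ((B - A) / 2) ^ 2 = (√2 * sin ((B - A) / 2)) ^ 2 := by
          rw [mul_pow, sq_sqrt zero_le_two]
      _ ≤ _ := pow_le_pow_left₀ (by positivity) hlow 2
  rw [cos_sub_cos_sq_add_sin_sub_sin_sq]
  linarith

/-- The polar angle of `rayDir s δ z` as a function of the polar angle `A = ∠(z, a₁)` of `z`: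
the three cases of the bending construction become one clamped affine map. -/
noncomputable def bendAngle (δ A : ℝ) : ℝ :=
  min π (max 0 (π / (π - 2 * δ) * (A - δ)))

section bendAngle

variable {δ : ℝ}

lemma bendAngle_nonneg (δ A : ℝ) : 0 ≤ bendAngle δ A :=
  le_min pi_nonneg (le_max_left _ _)

lemma bendAngle_le_pi (δ A : ℝ) : bendAngle δ A ≤ π :=
  min_le_left _ _

lemma bendAngle_monotone (hδ : 2 * δ < π) : Monotone (bendAngle δ) := fun A B hAB => by
  have hk : 0 ≤ π / (π - 2 * δ) := div_nonneg pi_nonneg (by linarith)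
  unfold bendAngle
  gcongr

lemma bendAngle_of_le {A : ℝ} (hδ : 2 * δ < π) (hA : A ≤ δ) : bendAngle δ A = 0 := by
  have hk : 0 ≤ π / (π - 2 * δ) := div_nonneg pi_nonneg (by linarith)
  rw [bendAngle, max_eq_left (mul_nonpos_of_nonneg_of_nonpos hk (by linarith)),
    min_eq_right pi_nonneg]

lemma bendAngle_of_pi_sub_le {A : ℝ} (hδ : 2 * δ < π) (hA : π - δ ≤ A) :
    bendAngle δ A = π := by
  have hπ : π ≤ π / (π - 2 * δ) * (A - δ) := by
    rw [div_mul_eq_mul_div, le_div_iff₀ (by linarith)]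
    nlinarith [pi_pos]
  rw [bendAngle, max_eq_right (pi_nonneg.trans hπ), min_eq_left hπ]

lemma bendAngle_of_mem_Icc {A : ℝ} (hδ : 2 * δ < π) (h₁ : δ ≤ A) (h₂ : A ≤ π - δ) :
    bendAngle δ A = π / (π - 2 * δ) * (A - δ) := by
  have hπ : π / (π - 2 * δ) * (A - δ) ≤ π := by
    rw [div_mul_eq_mul_div, div_le_iff₀ (by linarith)]
    nlinarith [pi_pos]
  rw [bendAngle, max_eq_right (mul_nonneg (div_nonneg pi_nonneg (by linarith)) (by linarith)),
    min_eq_right hπ]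

/-- On `[δ, π - δ]` the bent angle minus `A` is affine, equal to `-δ` and `δ` at the endpoints. -/
lemma abs_bendAngle_sub_le {A : ℝ} (hδ₀ : 0 ≤ δ) (hδ : 2 * δ < π) (hA₀ : 0 ≤ A) (hA₁ : A ≤ π) :
    |bendAngle δ A - A| ≤ δ := by
  rw [abs_le]
  rcases le_or_gt A δ with hAδ | hAδ
  · rw [bendAngle_of_le hδ hAδ]; constructor <;> linarith
  rcases le_or_gt (π - δ) A with hAπ | hAπ
  · rw [bendAngle_of_pi_sub_le hδ hAπ]; constructor <;> linarith
  rw [bendAngle_of_mem_Icc hδ hAδ.le hAπ.le]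
  set k := π / (π - 2 * δ)
  have hk : k * (π - 2 * δ) = π := div_mul_cancel₀ _ (by linarith)
  have hk₁ : 1 ≤ k := (one_le_div (by linarith)).2 (by linarith)
  constructor <;> nlinarith

end bendAngle

lemma sq_dist_le_two_mul_sq_dist_bendAngle {δ A B t u c : ℝ} (hδ₀ : 0 ≤ δ) (hδ : δ ≤ π / 4)
    (hA₀ : 0 ≤ A) (hA₁ : A ≤ π) (hB₀ : 0 ≤ B) (hB₁ : B ≤ π) (ht : 0 ≤ t) (hu : 0 ≤ u)
    (hc : |c| ≤ 1) :
    (cos A - cos B) ^ 2 + sin A ^ 2 + sin B ^ 2 - 2 * c * sin A * sin B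
      ≤ 2 * ((cos A + t * cos (bendAngle δ A) - (cos B + u * cos (bendAngle δ B))) ^ 2
        + (sin A + t * sin (bendAngle δ A)) ^ 2 + (sin B + u * sin (bendAngle δ B)) ^ 2
        - 2 * c * (sin A + t * sin (bendAngle δ A)) * (sin B + u * sin (bendAngle δ B))) := by
  have h2δ : 2 * δ < π := by linarith [pi_pos]
  have hθA : |bendAngle δ A - A| ≤ π / 4 := (abs_bendAngle_sub_le hδ₀ h2δ hA₀ hA₁).trans hδ
  have hθB : |bendAngle δ B - B| ≤ π / 4 := (abs_bendAngle_sub_le hδ₀ h2δ hB₀ hB₁).trans hδ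
  have hA := bendAngle_nonneg δ A
  have hB := bendAngle_nonneg δ B
  have hA' := bendAngle_le_pi δ A
  have hB' := bendAngle_le_pi δ B
  have hsame : (cos A - cos B) ^ 2 + (sin A - sin B) ^ 2
      ≤ 2 * ((cos A + t * cos (bendAngle δ A) - (cos B + u * cos (bendAngle δ B))) ^ 2
        + (sin A + t * sin (bendAngle δ A) - (sin B + u * sin (bendAngle δ B))) ^ 2) := by
    rcases le_total A B with hAB | hBA
    · exact chord_sq_le_two_mul_dist_sq_of_near_directions hAB (by linarith)
        (bendAngle_monotone h2δ hAB) (by linarith) hθA hθB ht hu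
    · have h := chord_sq_le_two_mul_dist_sq_of_near_directions hBA (by linarith)
        (bendAngle_monotone h2δ hBA) (by linarith) hθB hθA hu ht
      linarith
  have hopp : (cos A - cos B) ^ 2 + (sin A + sin B) ^ 2
      ≤ 2 * ((cos A + t * cos (bendAngle δ A) - (cos B + u * cos (bendAngle δ B))) ^ 2
        + (sin A + t * sin (bendAngle δ A) + (sin B + u * sin (bendAngle δ B))) ^ 2) := by
    -- the planar case with `y` reflected across the `a₁`-axis, i.e. `B ↦ -B`
    have h := chord_sq_le_two_mul_dist_sq_of_near_directions (A := -B) (B := A)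
      (θa := -bendAngle δ B) (θb := bendAngle δ A) (t := u) (u := t) (by linarith)
      (by linarith) (by linarith) (by linarith)
      (by rwa [show -bendAngle δ B - -B = -(bendAngle δ B - B) by ring, abs_neg]) hθA hu ht
    simp only [cos_neg, sin_neg] at h
    linarith
  rw [abs_le] at hc
  linarith [mul_le_mul_of_nonneg_left hsame (by linarith : (0:ℝ) ≤ 1 + c),
    mul_le_mul_of_nonneg_left hopp (by linarith : (0:ℝ) ≤ 1 - c)]

section Polar

variable {F : Type*} [NormedAddCommGroup F] [InnerProductSpace ℝ F]

lemma norm_smul_add_smul_sub_smul_add_smul_sq {e w w' : F} (he : ‖e‖ = 1) (hw : ‖w‖ = 1)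
    (hw' : ‖w'‖ = 1) (hew : ⟪e, w⟫ = 0) (hew' : ⟪e, w'⟫ = 0) (α β γ η : ℝ) :
    ‖(α • e + β • w) - (γ • e + η • w')‖ ^ 2
      = (α - γ) ^ 2 + β ^ 2 + η ^ 2 - 2 * ⟪w, w'⟫ * β * η := by
  have hee : ⟪e, e⟫ = 1 := by rw [real_inner_self_eq_norm_sq, he, one_pow]
  have hww : ⟪w, w⟫ = 1 := by rw [real_inner_self_eq_norm_sq, hw, one_pow]
  have hww' : ⟪w', w'⟫ = 1 := by rw [real_inner_self_eq_norm_sq, hw', one_pow]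
  rw [← real_inner_self_eq_norm_sq]
  simp only [inner_sub_left, inner_sub_right, inner_add_left, inner_add_right,
    real_inner_smul_left, real_inner_smul_right, hee, hww, hww', real_inner_comm e, hew, hew',
    real_inner_comm w]
  ring

lemma exists_eq_cos_angle_smul_add_sin_angle_smul {e z w₀ : F} (he : ‖e‖ = 1) (hz : ‖z‖ = 1)
    (hw₀ : ‖w₀‖ = 1) (hew₀ : ⟪e, w₀⟫ = 0) :
    ∃ w : F, ‖w‖ = 1 ∧ ⟪e, w⟫ = 0 ∧ z = cos (angle z e) • e + sin (angle z e) • w := by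
  set A := angle z e
  have hee : ⟪e, e⟫ = 1 := by rw [real_inner_self_eq_norm_sq, he, one_pow]
  have hzz : ⟪z, z⟫ = 1 := by rw [real_inner_self_eq_norm_sq, hz, one_pow]
  have hcos : ⟪z, e⟫ = cos A := by
    rw [← cos_angle_mul_norm_mul_norm, hz, he, mul_one, mul_one]
  set v := z - cos A • e with hv
  have hev : ⟪e, v⟫ = 0 := by
    rw [inner_sub_right, real_inner_smul_right, hee, real_inner_comm, hcos]
    ring
  have hnorm : ‖v‖ = sin A := by
    have hsq : ‖v‖ ^ 2 = sin A ^ 2 := by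
      rw [← real_inner_self_eq_norm_sq, sin_sq]
      simp only [v, inner_sub_left, inner_sub_right, real_inner_smul_left, real_inner_smul_right,
        hzz, hee, real_inner_comm z, hcos]
      ring
    exact (pow_left_inj₀ (norm_nonneg v) (sin_nonneg_of_nonneg_of_le_pi (angle_nonneg z e)
      (angle_le_pi z e)) two_ne_zero).1 hsq
  by_cases hv0 : v = 0
  · refine ⟨w₀, hw₀, hew₀, ?_⟩
    rw [← hnorm, hv0, norm_zero, zero_smul, add_zero, ← sub_eq_zero, ← hv, hv0]
  · have hsin : sin A ≠ 0 := by rwa [← hnorm, norm_ne_zero_iff]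
    refine ⟨(sin A)⁻¹ • v, ?_, ?_, ?_⟩
    · rw [norm_smul, hnorm, norm_inv, Real.norm_eq_abs, abs_of_nonneg (hnorm ▸ norm_nonneg v),
        inv_mul_cancel₀ hsin]
    · rw [real_inner_smul_right, hev, mul_zero]
    · rw [smul_inv_smul₀ hsin, hv, add_sub_cancel]

end Polar

lemma norm_e1 {s : ℕ} (hs : 0 < s) : ‖e1 s‖ = 1 := by
  simp [e1, hs]

lemma exists_norm_eq_one_inner_e1_eq_zero {s : ℕ} (hs : 2 ≤ s) :
    ∃ w : EuclideanSpace ℝ (Fin s), ‖w‖ = 1 ∧ ⟪e1 s, w⟫ = 0 := by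
  refine ⟨EuclideanSpace.single ⟨1, hs⟩ 1, by simp, ?_⟩
  rw [e1, dif_pos (by omega), EuclideanSpace.inner_single_left]
  simp

lemma rayDir_eq_cos_bendAngle_smul_add_sin_bendAngle_smul {s : ℕ} {δ : ℝ}
    {z w : EuclideanSpace ℝ (Fin s)} (hs : 0 < s) (hδ₀ : 0 ≤ δ) (hδ : 2 * δ < π)
    (hw : ‖w‖ = 1) (hew : ⟪e1 s, w⟫ = 0)
    (hz : z = cos (angle z (e1 s)) • e1 s + sin (angle z (e1 s)) • w) :
    rayDir s δ z = cos (bendAngle δ (angle z (e1 s))) • e1 s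
      + sin (bendAngle δ (angle z (e1 s))) • w := by
  rw [rayDir, angle_neg_right]
  generalize angle z (e1 s) = A at hz ⊢
  split_ifs with h₁ h₂
  · simp [bendAngle_of_le hδ h₁]
  · simp [bendAngle_of_pi_sub_le hδ (by linarith)]
  · push Not at h₁ h₂
    have hsin : 0 < sin A := sin_pos_of_pos_of_lt_pi (by linarith) (by linarith)
    have hcos : ⟪z, e1 s⟫ = cos A := by
      nth_rw 1 [hz]
      rw [inner_add_left, real_inner_smul_left, real_inner_smul_left, real_inner_self_eq_norm_sq,
        norm_e1 hs, real_inner_comm, hew]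
      ring
    have hv : z - ⟪z, e1 s⟫ • e1 s = sin A • w := by
      rw [hcos]; nth_rw 1 [hz]; abel
    rw [hv, norm_smul, hw, mul_one, Real.norm_eq_abs, abs_of_pos hsin, inv_smul_smul₀ hsin.ne',
      bendAngle_of_mem_Icc hδ h₁.le (by linarith)]

lemma le_setDist {E : Type*} [MetricSpace E] {A B : Set E} {r : ℝ} (hA : A.Nonempty)
    (hB : B.Nonempty) (h : ∀ a ∈ A, ∀ b ∈ B, r ≤ dist a b) : r ≤ setDist A B := by
  obtain ⟨a, ha⟩ := hA
  obtain ⟨b, hb⟩ := hB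
  refine le_csInf ⟨_, a, ha, b, hb, rfl⟩ ?_
  rintro _ ⟨a, ha, b, hb, rfl⟩
  exact h a ha b hb

lemma self_mem_ray (s : ℕ) (δ : ℝ) (x : EuclideanSpace ℝ (Fin s)) : x ∈ ray s δ x :=
  ⟨0, le_rfl, by rw [zero_smul, add_zero]⟩

lemma sq_dist_le_two_mul_sq_dist_of_mem_ray {s : ℕ} {δ : ℝ} (hs : 2 ≤ s) (hδ₀ : 0 ≤ δ)
    (hδ : δ ≤ π / 4) {x y p q : EuclideanSpace ℝ (Fin s)} (hx : ‖x‖ = 1) (hy : ‖y‖ = 1)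
    (hp : p ∈ ray s δ x) (hq : q ∈ ray s δ y) :
    dist x y ^ 2 ≤ 2 * dist p q ^ 2 := by
  have hs₀ : 0 < s := by omega
  have h2δ : 2 * δ < π := by linarith [pi_pos]
  have he := norm_e1 hs₀
  obtain ⟨w₀, hw₀, hew₀⟩ := exists_norm_eq_one_inner_e1_eq_zero hs
  obtain ⟨wx, hwx, hewx, hxpol⟩ := exists_eq_cos_angle_smul_add_sin_angle_smul he hx hw₀ hew₀
  obtain ⟨wy, hwy, hewy, hypol⟩ := exists_eq_cos_angle_smul_add_sin_angle_smul he hy hw₀ hew₀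
  obtain ⟨t, ht, rfl⟩ := hp
  obtain ⟨u, hu, rfl⟩ := hq
  rw [rayDir_eq_cos_bendAngle_smul_add_sin_bendAngle_smul hs₀ hδ₀ h2δ hwx hewx hxpol,
    rayDir_eq_cos_bendAngle_smul_add_sin_bendAngle_smul hs₀ hδ₀ h2δ hwy hewy hypol]
  have hA₀ := angle_nonneg x (e1 s)
  have hA₁ := angle_le_pi x (e1 s)
  have hB₀ := angle_nonneg y (e1 s)
  have hB₁ := angle_le_pi y (e1 s)
  generalize angle x (e1 s) = A at hxpol hA₀ hA₁ ⊢
  generalize angle y (e1 s) = B at hypol hB₀ hB₁ ⊢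
  subst hxpol hypol
  have hc : |⟪wx, wy⟫| ≤ 1 := by
    simpa [hwx, hwy] using abs_real_inner_le_norm wx wy
  have key := sq_dist_le_two_mul_sq_dist_bendAngle hδ₀ hδ hA₀ hA₁ hB₀ hB₁ ht hu hc
  rw [← norm_smul_add_smul_sub_smul_add_smul_sq he hwx hwy hewx hewy,
    ← norm_smul_add_smul_sub_smul_add_smul_sq he hwx hwy hewx hewy] at key
  rw [dist_eq_norm, dist_eq_norm]
  convert key using 3
  congr 1
  module

theorem stmt16_general (s : ℕ) (hs : 2 ≤ s) (δ : ℝ) (hδ0 : 0 < δ) (hδ : δ < Real.pi / 4)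
    (x y : EuclideanSpace ℝ (Fin s)) (hx : ‖x‖ = 1) (hy : ‖y‖ = 1) :
    setDist (ray s δ x) (ray s δ y) ≥ (1 / (2 * Real.sqrt 2)) * dist x y := by
  refine le_setDist ⟨x, self_mem_ray s δ x⟩ ⟨y, self_mem_ray s δ y⟩ fun p hp q hq => ?_
  have hsq := sq_dist_le_two_mul_sq_dist_of_mem_ray hs hδ0.le hδ.le hx hy hp hq
  have hxy : dist x y ≤ √2 * dist p q := by
    rw [← sqrt_sq dist_nonneg, ← sqrt_sq (mul_nonneg (sqrt_nonneg 2) dist_nonneg), mul_pow,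
      sq_sqrt zero_le_two]
    exact sqrt_le_sqrt hsq
  calc 1 / (2 * √2) * dist x y ≤ 1 / (2 * √2) * (√2 * dist p q) := by gcongr
    _ = dist p q / 2 := by field_simp
    _ ≤ dist p q := by linarith [dist_nonneg (x := p) (y := q)]

/-- For distinct unit vectors x, y, the rays L_x and L_y satisfy
d_E(L_x, L_y) ≥ (1/(2√2)) d_E(x,y). -/
theorem stmt16 (s : ℕ) (hs : 2 ≤ s) (δ : ℝ) (hδ0 : 0 < δ) (hδ : δ < Real.pi / 4)
    (x y : EuclideanSpace ℝ (Fin s)) (hx : ‖x‖ = 1) (hy : ‖y‖ = 1) (hxy : x ≠ y) :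
    setDist (ray s δ x) (ray s δ y) ≥ (1 / (2 * Real.sqrt 2)) * dist x y :=
  stmt16_general s hs δ hδ0 hδ x y hx hy
end
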